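/- arXiv:2202.09872 — 2 statements merged into one kernel-verified Lean document; each statement's English description precedes it below -/
import Mathlib

section
/- Consider a Hilbert space X with symmetric coercive form a, exact solution u of a(u,·) = f, and closed local subspaces X_{1,0},…,X_{N,0} ⊂ X. Suppose there is a constant c_pu > 0 such that for every w ∈ X (in the Galerkin trial space), ‖f − a(w,·)‖_{X'} ≤ c_pu √(Σ_{i=1}^N (r^(i)[w])²) where r^(i)[w] = sup_{v∈X_{i,0}} (f(v)−a(w,v))/‖v‖_a. Define the greedy enrichment iteration: given û_ℓ (Galerkin solution in Z_ℓ), select k = argmax_i r^(i)[û_ℓ], compute the local correction u_k ∈ X_{k,0} with a(û_ℓ + u_k, v) = f(v) ∀v∈X_{k,0}, and set Z_{ℓ+1} ⊇ Z_ℓ + span{u_k} with Galerkin solution û_{ℓ+1}. Then ‖u − û_ℓ‖_a ≤ (1 − 1/(N c_pu²))^{ℓ/2} ‖u − û_0‖_a for all ℓ ≥ 0. -/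
/-!
Bundle `a` as a positive semidefinite bilinear form `B`; the residual of `w` is then `B (u - w)`,
and the dual norm of `B e` is the energy norm of `e` (Cauchy–Schwarz). With `e_ℓ = u - û_ℓ` and
`r` the maximal local residual, the global bound gives `‖e_ℓ‖² ≤ N c_pu² r²`. The local correction
`d` is the `B`-projection of `e_ℓ` onto the selected local space, so
`‖e_ℓ - d‖² = ‖e_ℓ‖² - ‖d‖² ≤ ‖e_ℓ‖² - r²`, and since `û_ℓ + d ∈ Z_{ℓ+1}`, Galerkin best
approximation gives `‖e_{ℓ+1}‖ ≤ ‖e_ℓ - d‖`. Hence `‖e_{ℓ+1}‖² ≤ (1 - 1/(N c_pu²)) ‖e_ℓ‖²`.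
-/

open Real

namespace LinearMap.BilinForm

variable {X : Type*} [AddCommGroup X] [Module ℝ X] {B : LinearMap.BilinForm ℝ X}

noncomputable def dualNormOn (B : LinearMap.BilinForm ℝ X) (S : Set X) (x : X) : ℝ :=
  ⨆ v : S, B x v / √(B v v)

lemma apply_le_sqrt_mul_sqrt (hB : B.IsPosSemidef) (x y : X) :
    B x y ≤ √(B x x) * √(B y y) := by
  rw [← sqrt_mul (hB.nonneg x)]
  exact le_sqrt_of_sq_le (apply_sq_le_of_symm B hB.nonneg (isSymm_iff.1 hB.isSymm) x y)

lemma apply_div_sqrt_le (hB : B.IsPosSemidef) (x y : X) : B x y / √(B y y) ≤ √(B x x) :=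
  div_le_of_le_mul₀ (sqrt_nonneg _) (sqrt_nonneg _) (apply_le_sqrt_mul_sqrt hB x y)

lemma bddAbove_range_apply_div_sqrt (hB : B.IsPosSemidef) (S : Set X) (x : X) :
    BddAbove (Set.range fun v : S => B x v / √(B v v)) :=
  ⟨√(B x x), Set.forall_mem_range.2 fun v => apply_div_sqrt_le hB x v⟩

lemma apply_div_sqrt_le_dualNormOn (hB : B.IsPosSemidef) {S : Set X} {v : X} (hv : v ∈ S)
    (x : X) : B x v / √(B v v) ≤ B.dualNormOn S x :=
  le_ciSup (bddAbove_range_apply_div_sqrt hB S x) ⟨v, hv⟩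

lemma dualNormOn_le (hB : B.IsPosSemidef) {S : Set X} (hS : S.Nonempty) (x : X) :
    B.dualNormOn S x ≤ √(B x x) :=
  have : Nonempty S := hS.to_subtype
  ciSup_le fun v => apply_div_sqrt_le hB x v

lemma dualNormOn_nonneg (hB : B.IsPosSemidef) {S : Set X} (hS : 0 ∈ S) (x : X) :
    0 ≤ B.dualNormOn S x := by
  simpa using apply_div_sqrt_le_dualNormOn hB hS x

lemma dualNormOn_congr {S : Set X} {x y : X} (h : ∀ v ∈ S, B x v = B y v) :
    B.dualNormOn S x = B.dualNormOn S y :=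
  iSup_congr fun v => by rw [h v v.2]

lemma sqrt_le_dualNormOn_ne_zero (hB : B.IsPosSemidef) (x : X) :
    √(B x x) ≤ B.dualNormOn {v | v ≠ 0} x := by
  rcases eq_or_ne x 0 with rfl | hx
  · simp [dualNormOn]
  · simpa only [div_sqrt] using apply_div_sqrt_le_dualNormOn hB (S := {v | v ≠ 0}) hx x

lemma apply_add_self_of_apply_eq_zero (hB : B.IsSymm) {x z : X} (h : B x z = 0) :
    B (x + z) (x + z) = B x x + B z z := by
  have h' : B z x = 0 := hB.eq z x ▸ h
  simp only [map_add, LinearMap.add_apply, h, h', add_zero, zero_add]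

lemma apply_self_le_of_forall_apply_eq_zero (hB : B.IsPosSemidef) {Z : Submodule ℝ X}
    {e x : X} (he : ∀ z ∈ Z, B e z = 0) (hx : x - e ∈ Z) : B e e ≤ B x x := by
  have := apply_add_self_of_apply_eq_zero hB.isSymm (he _ hx)
  rw [add_sub_cancel] at this
  linarith [hB.nonneg (x - e)]

lemma apply_sub_self_le_sub_dualNormOn_sq (hB : B.IsPosSemidef) {V : Submodule ℝ X}
    {e d : X} (hd : d ∈ V) (hloc : ∀ v ∈ V, B (e - d) v = 0) :
    B (e - d) (e - d) ≤ B e e - B.dualNormOn V e ^ 2 := by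
  have hpyth := apply_add_self_of_apply_eq_zero hB.isSymm (hloc d hd)
  rw [sub_add_cancel] at hpyth
  have hres : B.dualNormOn V e = B.dualNormOn V d :=
    dualNormOn_congr fun v hv => by simpa [sub_eq_zero] using hloc v hv
  have hle : B.dualNormOn V d ^ 2 ≤ B d d := by
    rw [← sq_sqrt (hB.nonneg d)]
    exact pow_le_pow_left₀ (dualNormOn_nonneg hB V.zero_mem d)
      (dualNormOn_le hB ⟨0, V.zero_mem⟩ d) 2
  rw [hres]
  linarith

end LinearMap.BilinForm

lemma le_card_mul_sq_mul_sq_of_sqrt_le {ι : Type*} [Fintype ι] {E c : ℝ} {r : ι → ℝ} {k : ι}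
    (hE : √E ≤ c * √(∑ i, r i ^ 2)) (hr : ∀ i, 0 ≤ r i) (hk : ∀ i, r i ≤ r k) :
    E ≤ Fintype.card ι * c ^ 2 * r k ^ 2 := by
  have hsum : ∑ i, r i ^ 2 ≤ Fintype.card ι * r k ^ 2 := by
    simpa using Finset.sum_le_card_nsmul Finset.univ (fun i => r i ^ 2) (r k ^ 2)
      fun i _ => pow_le_pow_left₀ (hr i) (hk i) 2
  calc E ≤ (c * √(∑ i, r i ^ 2)) ^ 2 := (sqrt_le_iff.1 hE).2
    _ = c ^ 2 * ∑ i, r i ^ 2 := by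
      rw [mul_pow, sq_sqrt (Finset.sum_nonneg fun i _ => sq_nonneg (r i))]
    _ ≤ Fintype.card ι * c ^ 2 * r k ^ 2 := by nlinarith [sq_nonneg c]

lemma le_one_sub_one_div_mul_of_le_sub_sq {E E' M r : ℝ} (hM : 0 ≤ M) (hE : E ≤ M * r ^ 2)
    (hE' : E' ≤ E - r ^ 2) : E' ≤ (1 - 1 / M) * E := by
  have : E / M ≤ r ^ 2 := div_le_of_le_mul₀ hM (sq_nonneg r) (by rwa [mul_comm])
  calc E' ≤ E - E / M := by linarith
    _ = (1 - 1 / M) * E := by ring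

/-- For `q < 0` the recursion forces `E = 0`, so the junk value of `q ^ (n / 2)` is harmless. -/
lemma sqrt_le_rpow_mul_sqrt_of_le_mul {E : ℕ → ℝ} {q : ℝ} (hE : ∀ n, 0 ≤ E n)
    (h : ∀ n, E (n + 1) ≤ q * E n) (n : ℕ) : √(E n) ≤ q ^ ((n : ℝ) / 2) * √(E 0) := by
  rcases le_or_gt 0 q with hq | hq
  · have hgeom : ∀ n, E n ≤ q ^ n * E 0 := by
      intro n
      induction n with
      | zero => simp
      | succ n ih =>
        calc E (n + 1) ≤ q * E n := h n
          _ ≤ q * (q ^ n * E 0) := mul_le_mul_of_nonneg_left ih hq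
          _ = q ^ (n + 1) * E 0 := by ring
    calc √(E n) ≤ √(q ^ n * E 0) := sqrt_le_sqrt (hgeom n)
      _ = q ^ ((n : ℝ) / 2) * √(E 0) := by
        rw [sqrt_mul (pow_nonneg hq n), sqrt_eq_rpow, ← rpow_natCast, ← rpow_mul hq]
        ring_nf
  · have hsucc : ∀ n, E (n + 1) = 0 := fun n =>
      le_antisymm ((h n).trans (mul_nonpos_of_nonpos_of_nonneg hq.le (hE n))) (hE _)
    have hzero : E 0 = 0 := by nlinarith [h 0, hsucc 0, hE 0]
    cases n <;> simp [hsucc, hzero]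

theorem greedy_enrichment_exponential_convergence_general
    {X : Type*} [NormedAddCommGroup X] [InnerProductSpace ℝ X]
    (a : X → X → ℝ)
    (hbilin₁ : ∀ v, IsLinearMap ℝ (fun w => a w v))
    (hbilin₂ : ∀ w, IsLinearMap ℝ (a w))
    (hsymm : ∀ w v, a w v = a v w)
    (c₀ : ℝ) (hc₀ : 0 < c₀) (hcoer : ∀ w, c₀ * ‖w‖ ^ 2 ≤ a w w)
    (f : X →L[ℝ] ℝ)
    (u : X) (hu : ∀ v, a u v = f v)
    (N : ℕ)
    (Xloc : Fin N → Submodule ℝ X)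
    (resid : X → Fin N → ℝ)
    (hresid : ∀ w i, resid w i
      = ⨆ v : Xloc i, (f (v : X) - a w (v : X)) / Real.sqrt (a (v : X) (v : X)))
    (cpu : ℝ)
    -- the partition-of-unity residual bound on the global dual residual
    (hglobal : ∀ w : X,
      (⨆ v : {v : X // v ≠ 0}, (f (v : X) - a w (v : X)) / Real.sqrt (a (v : X) (v : X)))
        ≤ cpu * Real.sqrt (∑ i, (resid w i) ^ 2))
    (Z : ℕ → Submodule ℝ X)
    (uh : ℕ → X) (huhZ : ∀ ℓ, uh ℓ ∈ Z ℓ)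
    (hgal : ∀ ℓ, ∀ v ∈ Z ℓ, a (uh ℓ) v = f v)
    (k : ℕ → Fin N)
    (hk : ∀ ℓ i, resid (uh ℓ) i ≤ resid (uh ℓ) (k ℓ))
    (uloc : ℕ → X) (hulocmem : ∀ ℓ, uloc ℓ ∈ Xloc (k ℓ))
    (huloc : ∀ ℓ, ∀ v ∈ Xloc (k ℓ), a (uh ℓ + uloc ℓ) v = f v)
    (hnest : ∀ ℓ, Z ℓ ⊔ Submodule.span ℝ {uloc ℓ} ≤ Z (ℓ + 1)) :
    ∀ ℓ : ℕ, Real.sqrt (a (u - uh ℓ) (u - uh ℓ))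
      ≤ (1 - 1 / ((N : ℝ) * cpu ^ 2)) ^ ((ℓ : ℝ) / 2)
          * Real.sqrt (a (u - uh 0) (u - uh 0)) := by
  open LinearMap.BilinForm in
  let B : LinearMap.BilinForm ℝ X := LinearMap.mk₂ ℝ a (fun w w' v => (hbilin₁ v).map_add w w')
    (fun c w v => (hbilin₁ v).map_smul c w) (fun w v v' => (hbilin₂ w).map_add v v')
    (fun c w v => (hbilin₂ w).map_smul c v)
  have hB : B.IsPosSemidef :=
    ⟨⟨hsymm⟩, ⟨fun w => (by positivity : 0 ≤ c₀ * ‖w‖ ^ 2).trans (hcoer w)⟩⟩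
  have hres (w v : X) : f v - a w v = B (u - w) v := by
    rw [← hu]; exact ((hbilin₁ v).map_sub u w).symm
  have hresidB (w : X) (i : Fin N) : resid w i = B.dualNormOn (Xloc i) (u - w) := by
    simp only [hresid, hres]; rfl
  have hglob (w : X) : √(B (u - w) (u - w)) ≤ cpu * √(∑ i, resid w i ^ 2) :=
    (sqrt_le_dualNormOn_ne_zero hB _).trans <| by
      have := hglobal w
      simp only [hres] at this
      exact this
  have hstep (ℓ : ℕ) : B (u - uh (ℓ + 1)) (u - uh (ℓ + 1))
      ≤ (1 - 1 / ((N : ℝ) * cpu ^ 2)) * B (u - uh ℓ) (u - uh ℓ) := by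
    have henriched : uh ℓ + uloc ℓ ∈ Z (ℓ + 1) :=
      hnest ℓ (Submodule.add_mem_sup (huhZ ℓ) (Submodule.mem_span_singleton_self _))
    have hgalerkin := apply_self_le_of_forall_apply_eq_zero hB
      (fun z hz => by rw [← hres, hgal _ z hz, sub_self])
      (show u - uh ℓ - uloc ℓ - (u - uh (ℓ + 1)) ∈ Z (ℓ + 1) by
        convert (Z (ℓ + 1)).sub_mem (huhZ (ℓ + 1)) henriched using 1; abel)
    have hlocal := apply_sub_self_le_sub_dualNormOn_sq hB (hulocmem ℓ) fun v hv => by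
      rw [sub_sub, ← hres, huloc ℓ v hv, sub_self]
    have hmax := le_card_mul_sq_mul_sq_of_sqrt_le (hglob (uh ℓ))
      (fun i => (hresidB _ i).symm ▸ dualNormOn_nonneg hB (Xloc i).zero_mem _) (hk ℓ)
    rw [Fintype.card_fin, hresidB] at hmax
    exact le_one_sub_one_div_mul_of_le_sub_sq (by positivity) hmax (hgalerkin.trans hlocal)
  exact sqrt_le_rpow_mul_sqrt_of_le_mul (fun n => hB.nonneg _) hstep

/-- Exponential convergence of the greedy local enrichment algorithm for a symmetric
coercive problem: `‖u − û_ℓ‖_a ≤ (1 − 1/(N c_pu²))^{ℓ/2} ‖u − û_0‖_a`. -/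
theorem greedy_enrichment_exponential_convergence
    {X : Type*} [NormedAddCommGroup X] [InnerProductSpace ℝ X] [CompleteSpace X]
    (a : X → X → ℝ)
    (hbilin₁ : ∀ v, IsLinearMap ℝ (fun w => a w v))
    (hbilin₂ : ∀ w, IsLinearMap ℝ (a w))
    (hsymm : ∀ w v, a w v = a v w)
    (c₀ : ℝ) (hc₀ : 0 < c₀) (hcoer : ∀ w, c₀ * ‖w‖ ^ 2 ≤ a w w)
    (Ca : ℝ) (hcont : ∀ w v, |a w v| ≤ Ca * ‖w‖ * ‖v‖)
    (f : X →L[ℝ] ℝ)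
    (u : X) (hu : ∀ v, a u v = f v)
    (N : ℕ) (hNpos : 0 < N)
    (Xloc : Fin N → Submodule ℝ X) (hXloc : ∀ i, IsClosed ((Xloc i : Set X)))
    (resid : X → Fin N → ℝ)
    (hresid : ∀ w i, resid w i
      = ⨆ v : Xloc i, (f (v : X) - a w (v : X)) / Real.sqrt (a (v : X) (v : X)))
    (cpu : ℝ) (hcpu : 0 < cpu)
    -- the partition-of-unity residual bound on the global dual residual
    (hglobal : ∀ w : X,
      (⨆ v : {v : X // v ≠ 0}, (f (v : X) - a w (v : X)) / Real.sqrt (a (v : X) (v : X)))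
        ≤ cpu * Real.sqrt (∑ i, (resid w i) ^ 2))
    (Z : ℕ → Submodule ℝ X) (hZ : ∀ ℓ, IsClosed ((Z ℓ : Set X)))
    (uh : ℕ → X) (huhZ : ∀ ℓ, uh ℓ ∈ Z ℓ)
    (hgal : ∀ ℓ, ∀ v ∈ Z ℓ, a (uh ℓ) v = f v)
    (k : ℕ → Fin N)
    (hk : ∀ ℓ i, resid (uh ℓ) i ≤ resid (uh ℓ) (k ℓ))
    (uloc : ℕ → X) (hulocmem : ∀ ℓ, uloc ℓ ∈ Xloc (k ℓ))
    (huloc : ∀ ℓ, ∀ v ∈ Xloc (k ℓ), a (uh ℓ + uloc ℓ) v = f v)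
    (hnest : ∀ ℓ, Z ℓ ⊔ Submodule.span ℝ {uloc ℓ} ≤ Z (ℓ + 1)) :
    ∀ ℓ : ℕ, Real.sqrt (a (u - uh ℓ) (u - uh ℓ))
      ≤ (1 - 1 / ((N : ℝ) * cpu ^ 2)) ^ ((ℓ : ℝ) / 2)
          * Real.sqrt (a (u - uh 0) (u - uh 0)) :=
  greedy_enrichment_exponential_convergence_general a hbilin₁ hbilin₂ hsymm c₀ hc₀ hcoer f u hu N
    Xloc resid hresid cpu hglobal Z uh huhZ hgal k hk uloc hulocmem huloc hnest
end

section
/- Let a_μ be a family of symmetric coercive forms indexed by μ in a finite set P of size n, each satisfying the single-configuration one-step reduction and residual bound with uniform constants N_dd,max and c_pu. Run the multi-configuration greedy enrichment that at step ℓ picks the pair (component, parameter) with maximal local residual and enriches the shared space. Then there exist constants C, α > 0 (depending on n, N_dd,max, c_pu and the initial errors) such that max_{μ∈P} ‖u_μ − û_{ℓ,μ}‖_{a_μ} ≤ C e^{−αℓ} for all ℓ. -/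
/-!
Summing the squared energy errors over the finite training set gives a potential that the greedy
step lowers by the square of the selected (maximal) local residual: Galerkin best approximation
makes every error non-increasing, and the local solve removes the selected residual from the
selected parameter. The partition-of-unity bound controls every single error, hence the whole
potential, by `n · c_pu² · N_dd` times that same squared residual, so the potential contracts
by the fixed factor `1 - 1 / (n c_pu² N_dd + 1)` at every step.
-/

open Real Finset

namespace LinearMap.BilinForm

variable {X : Type*} [AddCommGroup X] [Module ℝ X] {B : LinearMap.BilinForm ℝ X}

def ofIsLinearMap {a : X → X → ℝ} (h₁ : ∀ v, IsLinearMap ℝ (fun w => a w v))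
    (h₂ : ∀ w, IsLinearMap ℝ (a w)) : LinearMap.BilinForm ℝ X :=
  LinearMap.mk₂ ℝ a (fun x y v => (h₁ v).map_add x y) (fun t x v => (h₁ v).map_smul t x)
    (fun w x y => (h₂ w).map_add x y) (fun t w x => (h₂ w).map_smul t x)

@[simp]
lemma ofIsLinearMap_apply {a : X → X → ℝ} (h₁ : ∀ v, IsLinearMap ℝ (fun w => a w v))
    (h₂ : ∀ w, IsLinearMap ℝ (a w)) (x y : X) : ofIsLinearMap h₁ h₂ x y = a x y :=
  rfl

lemma IsSymm.apply_add_add_of_apply_eq_zero (hB : B.IsSymm) {x y : X} (hxy : B x y = 0) :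
    B (x + y) (x + y) = B x x + B y y := by
  simp only [map_add, LinearMap.add_apply, hxy, ← hB.eq x y]
  ring

namespace IsPosSemidef

lemma apply_le_sqrt_mul_sqrt (hB : B.IsPosSemidef) (x y : X) :
    B x y ≤ √(B x x) * √(B y y) := by
  rw [← Real.sqrt_mul (hB.isNonneg.nonneg x)]
  exact (le_abs_self _).trans
    (Real.abs_le_sqrt (B.apply_sq_le_of_symm hB.isNonneg.nonneg (isSymm_iff.1 hB.isSymm) x y))

lemma apply_div_sqrt_le (hB : B.IsPosSemidef) (x y : X) : B x y / √(B y y) ≤ √(B x x) := by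
  rcases (Real.sqrt_nonneg (B y y)).eq_or_lt with h | h
  · rw [← h, div_zero]
    exact Real.sqrt_nonneg _
  · rw [div_le_iff₀ h]
    exact hB.apply_le_sqrt_mul_sqrt x y

lemma bddAbove_range_apply_div_sqrt {ι : Type*} (hB : B.IsPosSemidef) (x : X) (g : ι → X) :
    BddAbove (Set.range fun i => B x (g i) / √(B (g i) (g i))) :=
  ⟨√(B x x), Set.forall_mem_range.2 fun i => hB.apply_div_sqrt_le x (g i)⟩

lemma ciSup_apply_div_sqrt_nonneg (hB : B.IsPosSemidef) (x : X) (V : Submodule ℝ X) :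
    0 ≤ ⨆ v : V, B x v / √(B v v) := by
  simpa using le_ciSup (hB.bddAbove_range_apply_div_sqrt x ((↑) : V → X)) 0

lemma ciSup_apply_div_sqrt_le_of_sub_orthogonal (hB : B.IsPosSemidef) {V : Submodule ℝ X}
    {x g : X} (hg : ∀ v ∈ V, B (x - g) v = 0) : ⨆ v : V, B x v / √(B v v) ≤ √(B g g) :=
  ciSup_le fun v => by
    rw [show B x v = B g v by simpa [sub_eq_zero] using hg v v.2]
    exact hB.apply_div_sqrt_le g v

lemma apply_self_le_sq_of_ciSup_le (hB : B.IsPosSemidef) {x : X} {t : ℝ} (ht : 0 ≤ t)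
    (h : ⨆ v : {v : X // v ≠ 0}, B x v / √(B v v) ≤ t) : B x x ≤ t ^ 2 := by
  by_cases hx : x = 0
  · simp [hx, ht]
  have hsqrt : √(B x x) ≤ t := by
    refine le_trans ?_ h
    simpa [Real.div_sqrt] using
      le_ciSup (hB.bddAbove_range_apply_div_sqrt x ((↑) : {v : X // v ≠ 0} → X)) ⟨x, hx⟩
  simpa [Real.sq_sqrt (hB.isNonneg.nonneg x)] using pow_le_pow_left₀ (Real.sqrt_nonneg _) hsqrt 2

lemma apply_self_le_of_ciSup_le_mul_sqrt_sum {ι : Type*} [Fintype ι] (hB : B.IsPosSemidef)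
    {x : X} {c R : ℝ} {r : ι → ℝ} (hc : 0 ≤ c) (hr : ∀ i, 0 ≤ r i) (hR : ∀ i, r i ≤ R)
    (h : ⨆ v : {v : X // v ≠ 0}, B x v / √(B v v) ≤ c * √(∑ i, r i ^ 2)) :
    B x x ≤ c ^ 2 * Fintype.card ι * R ^ 2 :=
  calc B x x ≤ (c * √(∑ i, r i ^ 2)) ^ 2 := hB.apply_self_le_sq_of_ciSup_le (by positivity) h
    _ = c ^ 2 * ∑ i, r i ^ 2 := by rw [mul_pow, Real.sq_sqrt (by positivity)]
    _ ≤ c ^ 2 * (Fintype.card ι • R ^ 2) := by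
        gcongr
        exact sum_le_card_nsmul _ _ _ fun i _ => pow_le_pow_left₀ (hr i) (hR i) 2
    _ = c ^ 2 * Fintype.card ι * R ^ 2 := by rw [nsmul_eq_mul]; ring

lemma apply_sub_self_le_of_orthogonal (hB : B.IsPosSemidef) {Z : Submodule ℝ X} {u w z : X}
    (hw : w ∈ Z) (hz : z ∈ Z) (horth : ∀ v ∈ Z, B (u - w) v = 0) :
    B (u - w) (u - w) ≤ B (u - z) (u - z) := by
  have h := hB.isSymm.apply_add_add_of_apply_eq_zero (horth _ (Z.sub_mem hw hz))
  rw [sub_add_sub_cancel] at h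
  linarith [hB.isNonneg.nonneg (w - z)]

lemma apply_sub_self_le_sub_sq_ciSup (hB : B.IsPosSemidef) {V Z : Submodule ℝ X}
    {u w w' g : X} (hg : g ∈ V) (hloc : ∀ v ∈ V, B (u - (w + g)) v = 0) (hwg : w + g ∈ Z)
    (hw' : w' ∈ Z) (horth : ∀ v ∈ Z, B (u - w') v = 0) :
    B (u - w') (u - w') ≤ B (u - w) (u - w) - (⨆ v : V, B (u - w) v / √(B v v)) ^ 2 := by
  have hr₀ := hB.ciSup_apply_div_sqrt_nonneg (u - w) V
  have hrg := hB.ciSup_apply_div_sqrt_le_of_sub_orthogonal (x := u - w) (g := g)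
    (by simpa only [sub_sub] using hloc)
  have hpyth := hB.isSymm.apply_add_add_of_apply_eq_zero (hloc g hg)
  rw [show u - (w + g) + g = u - w by abel] at hpyth
  calc B (u - w') (u - w') ≤ B (u - (w + g)) (u - (w + g)) :=
        hB.apply_sub_self_le_of_orthogonal hw' hwg horth
    _ ≤ _ := by
        nlinarith [pow_le_pow_left₀ hr₀ hrg 2, Real.sq_sqrt (hB.isNonneg.nonneg g)]

end IsPosSemidef

end LinearMap.BilinForm

lemma le_mul_exp_of_sub_le {x y : ℕ → ℝ} {c : ℝ} (hc : 0 ≤ c) (hx₀ : 0 ≤ x 0)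
    (hy : ∀ ℓ, 0 ≤ y ℓ) (hstep : ∀ ℓ, x (ℓ + 1) ≤ x ℓ - y ℓ) (hbound : ∀ ℓ, x ℓ ≤ c * y ℓ)
    (ℓ : ℕ) : x ℓ ≤ x 0 * exp (-(ℓ / (c + 1))) := by
  induction ℓ with
  | zero => simp
  | succ ℓ ih =>
    have hc₁ : 0 < c + 1 := by linarith
    have hcontr : x (ℓ + 1) ≤ (1 - 1 / (c + 1)) * x ℓ := by
      rw [one_sub_div hc₁.ne', add_sub_cancel_right, div_mul_eq_mul_div, le_div_iff₀ hc₁]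
      nlinarith [hstep ℓ, hbound ℓ, hy ℓ]
    have hfactor : 1 - 1 / (c + 1) ≤ exp (-(1 / (c + 1))) := by
      linarith [add_one_le_exp (-(1 / (c + 1)))]
    calc x (ℓ + 1) ≤ (1 - 1 / (c + 1)) * x ℓ := hcontr
      _ ≤ (1 - 1 / (c + 1)) * (x 0 * exp (-(ℓ / (c + 1)))) := by
          gcongr
          rw [sub_nonneg, div_le_one hc₁]
          linarith
      _ ≤ exp (-(1 / (c + 1))) * (x 0 * exp (-(ℓ / (c + 1)))) := by gcongr
      _ = x 0 * exp (-(↑(ℓ + 1) / (c + 1))) := by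
          rw [mul_left_comm, ← exp_add]
          push_cast
          ring_nf

lemma sum_le_mul_exp_of_greedy {ι : Type*} [Fintype ι] {E : ℕ → ι → ℝ} {R : ℕ → ℝ} {C : ℝ}
    (m : ℕ → ι) (hC : 0 ≤ C) (hE : ∀ ℓ μ, 0 ≤ E ℓ μ) (hmono : ∀ ℓ μ, E (ℓ + 1) μ ≤ E ℓ μ)
    (hstep : ∀ ℓ, E (ℓ + 1) (m ℓ) ≤ E ℓ (m ℓ) - R ℓ ^ 2) (hbound : ∀ ℓ μ, E ℓ μ ≤ C * R ℓ ^ 2)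
    (ℓ : ℕ) : ∑ μ, E ℓ μ ≤ (∑ μ, E 0 μ) * exp (-(ℓ / (Fintype.card ι * C + 1))) := by
  classical
  refine le_mul_exp_of_sub_le (x := fun ℓ => ∑ μ, E ℓ μ) (y := fun ℓ => R ℓ ^ 2) (by positivity)
    (sum_nonneg fun μ _ => hE 0 μ) (fun ℓ => sq_nonneg _) (fun ℓ => ?_) (fun ℓ => ?_) ℓ
  · calc ∑ μ, E (ℓ + 1) μ ≤ ∑ μ, (E ℓ μ - if μ = m ℓ then R ℓ ^ 2 else 0) :=
          sum_le_sum fun μ _ => by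
            split_ifs with h
            · exact h ▸ hstep ℓ
            · simpa using hmono ℓ μ
      _ = ∑ μ, E ℓ μ - R ℓ ^ 2 := by simp [sum_sub_distrib]
  · calc ∑ μ, E ℓ μ ≤ Fintype.card ι • (C * R ℓ ^ 2) :=
          sum_le_card_nsmul _ _ _ fun μ _ => hbound ℓ μ
      _ = Fintype.card ι * C * R ℓ ^ 2 := by rw [nsmul_eq_mul]; ring

lemma exists_sqrt_le_mul_exp {ι : Type*} {F : ι → ℕ → ℝ} {A D : ℝ} (hD : 0 < D)
    (hF : ∀ i ℓ, F i ℓ ≤ A * exp (-(ℓ / D))) :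
    ∃ C α : ℝ, 0 < C ∧ 0 < α ∧ ∀ ℓ : ℕ, ∀ i, √(F i ℓ) ≤ C * exp (-α * ℓ) := by
  refine ⟨√(|A| + 1), 1 / (2 * D), by positivity, by positivity, fun ℓ i => ?_⟩
  have hsq : (√(|A| + 1) * exp (-(1 / (2 * D)) * ℓ)) ^ 2 = (|A| + 1) * exp (-(ℓ / D)) := by
    rw [mul_pow, Real.sq_sqrt (by positivity), ← exp_nat_mul]
    congr 1
    push_cast
    field_simp
  calc √(F i ℓ) ≤ √((|A| + 1) * exp (-(ℓ / D))) :=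
        Real.sqrt_le_sqrt ((hF i ℓ).trans (by gcongr; linarith [le_abs_self A]))
    _ = √(|A| + 1) * exp (-(1 / (2 * D)) * ℓ) := by rw [← hsq, Real.sqrt_sq (by positivity)]

theorem multi_config_greedy_exponential_convergence_general
    {X : Type*} [NormedAddCommGroup X] [InnerProductSpace ℝ X]
    (n : ℕ)  -- size of the training set P
    (Ndd : ℕ)  -- uniform bound on number of components
    (a : Fin n → X → X → ℝ)
    (hbilin₁ : ∀ μ v, IsLinearMap ℝ (fun w => a μ w v))
    (hbilin₂ : ∀ μ w, IsLinearMap ℝ (a μ w))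
    (hsymm : ∀ μ w v, a μ w v = a μ v w)
    (c₀ : Fin n → ℝ) (hc₀ : ∀ μ, 0 < c₀ μ)
    (hcoer : ∀ μ w, c₀ μ * ‖w‖ ^ 2 ≤ a μ w w)
    (f : Fin n → X →L[ℝ] ℝ)
    (u : Fin n → X) (hu : ∀ μ v, a μ (u μ) v = f μ v)
    (Xloc : Fin n → Fin Ndd → Submodule ℝ X)
    (resid : Fin n → X → Fin Ndd → ℝ)
    (hresid : ∀ μ w i, resid μ w i
      = ⨆ v : Xloc μ i, (f μ (v : X) - a μ w (v : X)) / Real.sqrt (a μ (v : X) (v : X)))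
    (cpu : ℝ) (hcpu : 0 < cpu)
    (hglobal : ∀ μ (w : X),
      (⨆ v : {v : X // v ≠ 0},
          (f μ (v : X) - a μ w (v : X)) / Real.sqrt (a μ (v : X) (v : X)))
        ≤ cpu * Real.sqrt (∑ i, (resid μ w i) ^ 2))
    (Z : ℕ → Submodule ℝ X)
    (uh : ℕ → Fin n → X) (huhZ : ∀ ℓ μ, uh ℓ μ ∈ Z ℓ)
    (hgal : ∀ ℓ μ, ∀ v ∈ Z ℓ, a μ (uh ℓ μ) v = f μ v)
    (m : ℕ → Fin n) (k : ℕ → Fin Ndd)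
    -- greedy selection of the pair (parameter, component) with maximal local residual
    (hmax : ∀ ℓ μ i, resid μ (uh ℓ μ) i ≤ resid (m ℓ) (uh ℓ (m ℓ)) (k ℓ))
    (uloc : ℕ → X) (hulocmem : ∀ ℓ, uloc ℓ ∈ Xloc (m ℓ) (k ℓ))
    (huloc : ∀ ℓ, ∀ v ∈ Xloc (m ℓ) (k ℓ), a (m ℓ) (uh ℓ (m ℓ) + uloc ℓ) v = f (m ℓ) v)
    (hnest : ∀ ℓ, Z ℓ ⊔ Submodule.span ℝ {uloc ℓ} ≤ Z (ℓ + 1)) :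
    ∃ Cc α : ℝ, 0 < Cc ∧ 0 < α ∧
      ∀ ℓ : ℕ, ∀ μ : Fin n,
        Real.sqrt (a μ (u μ - uh ℓ μ) (u μ - uh ℓ μ)) ≤ Cc * Real.exp (-α * ℓ) := by
  let B μ := LinearMap.BilinForm.ofIsLinearMap (hbilin₁ μ) (hbilin₂ μ)
  have hB μ : (B μ).IsPosSemidef :=
    ⟨⟨hsymm μ⟩, ⟨fun w => (mul_nonneg (hc₀ μ).le (sq_nonneg _)).trans (hcoer μ w)⟩⟩
  have hres μ w v : f μ v - a μ w v = B μ (u μ - w) v := by simp [B, map_sub, hu]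
  have hresid' μ w i : resid μ w i = ⨆ v : Xloc μ i, B μ (u μ - w) v / √(B μ v v) := by
    simp only [hresid, hres]; rfl
  have horth ℓ μ : ∀ v ∈ Z ℓ, B μ (u μ - uh ℓ μ) v = 0 := fun v hv => by
    rw [← hres, hgal ℓ μ v hv, sub_self]
  have hZ ℓ : Z ℓ ≤ Z (ℓ + 1) := le_sup_left.trans (hnest ℓ)
  have hmono ℓ μ := (hB μ).apply_sub_self_le_of_orthogonal (huhZ (ℓ + 1) μ) (hZ ℓ (huhZ ℓ μ))
    (horth (ℓ + 1) μ)
  have hstep ℓ := hresid' (m ℓ) (uh ℓ (m ℓ)) (k ℓ) ▸ (hB (m ℓ)).apply_sub_self_le_sub_sq_ciSup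
    (hulocmem ℓ) (fun v hv => by rw [← hres, huloc ℓ v hv, sub_self])
    ((Z (ℓ + 1)).add_mem (hZ ℓ (huhZ ℓ _))
      (hnest ℓ (Submodule.mem_sup_right (Submodule.mem_span_singleton_self _))))
    (huhZ (ℓ + 1) (m ℓ)) (horth (ℓ + 1) (m ℓ))
  have hbound ℓ μ := (hB μ).apply_self_le_of_ciSup_le_mul_sqrt_sum hcpu.le
    (fun i => hresid' μ (uh ℓ μ) i ▸ (hB μ).ciSup_apply_div_sqrt_nonneg _ _) (hmax ℓ μ)
    ((by simp only [hres]; rfl : _ = _).trans_le (hglobal μ (uh ℓ μ)))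
  have hdecay := sum_le_mul_exp_of_greedy m (by positivity) (fun ℓ μ => (hB μ).isNonneg.nonneg _)
    hmono hstep hbound
  exact exists_sqrt_le_mul_exp (F := fun μ ℓ => B μ (u μ - uh ℓ μ) (u μ - uh ℓ μ))
    (by positivity) fun μ ℓ => (single_le_sum (f := fun μ => B μ (u μ - uh ℓ μ) (u μ - uh ℓ μ))
      (fun μ _ => (hB μ).isNonneg.nonneg _) (mem_univ μ)).trans (hdecay ℓ)

/-- Exponential convergence of the multi-configuration greedy enrichment algorithm:
for a finite family of symmetric coercive problems sharing the reduced space, with the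
uniform partition-of-unity residual bound, the maximal energy error over the training
set decays exponentially in the iteration count. -/
theorem multi_config_greedy_exponential_convergence
    {X : Type*} [NormedAddCommGroup X] [InnerProductSpace ℝ X] [CompleteSpace X]
    (n : ℕ) (hn : 0 < n)                        -- size of the training set P
    (Ndd : ℕ) (hNdd : 0 < Ndd)                  -- uniform bound on number of components
    (a : Fin n → X → X → ℝ)
    (hbilin₁ : ∀ μ v, IsLinearMap ℝ (fun w => a μ w v))
    (hbilin₂ : ∀ μ w, IsLinearMap ℝ (a μ w))
    (hsymm : ∀ μ w v, a μ w v = a μ v w)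
    (c₀ : Fin n → ℝ) (hc₀ : ∀ μ, 0 < c₀ μ)
    (hcoer : ∀ μ w, c₀ μ * ‖w‖ ^ 2 ≤ a μ w w)
    (Ca : Fin n → ℝ) (hcont : ∀ μ w v, |a μ w v| ≤ Ca μ * ‖w‖ * ‖v‖)
    (f : Fin n → X →L[ℝ] ℝ)
    (u : Fin n → X) (hu : ∀ μ v, a μ (u μ) v = f μ v)
    (Xloc : Fin n → Fin Ndd → Submodule ℝ X)
    (hXloc : ∀ μ i, IsClosed ((Xloc μ i : Set X)))
    (resid : Fin n → X → Fin Ndd → ℝ)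
    (hresid : ∀ μ w i, resid μ w i
      = ⨆ v : Xloc μ i, (f μ (v : X) - a μ w (v : X)) / Real.sqrt (a μ (v : X) (v : X)))
    (cpu : ℝ) (hcpu : 0 < cpu)
    (hglobal : ∀ μ (w : X),
      (⨆ v : {v : X // v ≠ 0},
          (f μ (v : X) - a μ w (v : X)) / Real.sqrt (a μ (v : X) (v : X)))
        ≤ cpu * Real.sqrt (∑ i, (resid μ w i) ^ 2))
    (Z : ℕ → Submodule ℝ X) (hZ : ∀ ℓ, IsClosed ((Z ℓ : Set X)))
    (uh : ℕ → Fin n → X) (huhZ : ∀ ℓ μ, uh ℓ μ ∈ Z ℓ)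
    (hgal : ∀ ℓ μ, ∀ v ∈ Z ℓ, a μ (uh ℓ μ) v = f μ v)
    (m : ℕ → Fin n) (k : ℕ → Fin Ndd)
    -- greedy selection of the pair (parameter, component) with maximal local residual
    (hmax : ∀ ℓ μ i, resid μ (uh ℓ μ) i ≤ resid (m ℓ) (uh ℓ (m ℓ)) (k ℓ))
    (uloc : ℕ → X) (hulocmem : ∀ ℓ, uloc ℓ ∈ Xloc (m ℓ) (k ℓ))
    (huloc : ∀ ℓ, ∀ v ∈ Xloc (m ℓ) (k ℓ), a (m ℓ) (uh ℓ (m ℓ) + uloc ℓ) v = f (m ℓ) v)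
    (hnest : ∀ ℓ, Z ℓ ⊔ Submodule.span ℝ {uloc ℓ} ≤ Z (ℓ + 1)) :
    ∃ Cc α : ℝ, 0 < Cc ∧ 0 < α ∧
      ∀ ℓ : ℕ, ∀ μ : Fin n,
        Real.sqrt (a μ (u μ - uh ℓ μ) (u μ - uh ℓ μ)) ≤ Cc * Real.exp (-α * ℓ) :=
  multi_config_greedy_exponential_convergence_general n Ndd a hbilin₁ hbilin₂ hsymm c₀ hc₀ hcoer f u
    hu Xloc resid hresid cpu hcpu hglobal Z uh huhZ hgal m k hmax uloc hulocmem huloc hnest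
end
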